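/- arXiv:1311.7023 — 2 statements merged into one kernel-verified Lean document; each statement's English description precedes it below -/
import Mathlib

section
/- Let (Ω, ℙ) be a probability space, σ : Ω → Ω measure-preserving and ergodic, and A an event with p := ℙ(A) > 0. For ω ∈ Ω and n ≥ 1, let k₀ < k₁ < ⋯ < k_r enumerate the indices k ∈ [−n, n] ∩ ℤ with σ^k ω ∈ A (with σ^{-1} the inverse of σ, assumed invertible and measure-preserving), and set Δ_n(ω) = max_j (k_j − k_{j−1}) (Δ_n = ∞ if there are no such indices). Then ℙ-almost surely Δ_n/n → 0 as n → ∞. -/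
/-!
By Hopf's maximal ergodic inequality, `β * μ {x | ∃ n, β * n < #{k < n | f^[k] x ∈ C}} ≤ μ C`.
The set of points whose upper frequency of visits to `C` is at least `q` is invariant, so for
`q > μ C` ergodicity makes it null: almost surely the visit frequency to `C` is eventually below
`q`, both for `T` and for `T⁻¹`. Almost every orbit meets `A`, so the set `C_m` of points whose
orbit window `[-m, m]` misses `A` has small measure for large `m`. A visit-free gap `(j, k)` inside
`[-n, n]` yields at least `k - j - 2m - 1` times `l ∈ [-n, n]` with `T^l ω ∈ C_m`, and the forward
and backward visit frequencies to `C_m` bound their number by `δ n / 2 + O(1)`.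
-/

open MeasureTheory Filter Topology Finset

section Maximal

variable {α : Type*} {f : α → α} {g : α → ℝ}

noncomputable def birkhoffMax (f : α → α) (g : α → ℝ) (N : ℕ) (x : α) : ℝ :=
  (range (N + 1)).sup' nonempty_range_add_one fun n => birkhoffSum f g n x

lemma birkhoffSum_le_birkhoffMax {n N : ℕ} (h : n ≤ N) (x : α) :
    birkhoffSum f g n x ≤ birkhoffMax f g N x :=
  le_sup' (fun n => birkhoffSum f g n x) (mem_range.2 (Nat.lt_succ_of_le h))

lemma birkhoffMax_nonneg (N : ℕ) (x : α) : 0 ≤ birkhoffMax f g N x := by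
  simpa using birkhoffSum_le_birkhoffMax (f := f) (g := g) (Nat.zero_le N) x

lemma birkhoffMax_mono {M N : ℕ} (h : M ≤ N) (x : α) :
    birkhoffMax f g M x ≤ birkhoffMax f g N x :=
  sup'_mono _ (range_subset_range.2 (by omega)) _

lemma birkhoffMax_le_indicator_add (N : ℕ) (x : α) :
    birkhoffMax f g N x ≤
      {y | 0 < birkhoffMax f g N y}.indicator g x + birkhoffMax f g N (f x) := by
  by_cases hx : 0 < birkhoffMax f g N x
  · rw [Set.indicator_of_mem (by exact hx)]
    obtain ⟨n, hn, hmax⟩ := exists_mem_eq_sup' nonempty_range_add_one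
      (fun n => birkhoffSum f g n x)
    rw [← birkhoffMax] at hmax
    obtain _ | n := n
    · rw [hmax, birkhoffSum_zero] at hx
      exact absurd hx (lt_irrefl 0)
    rw [hmax, birkhoffSum_succ']
    gcongr
    exact birkhoffSum_le_birkhoffMax (by grind) _
  · rw [Set.indicator_of_notMem (by exact hx)]
    linarith [birkhoffMax_nonneg (f := f) (g := g) N (f x)]

lemma Measurable.birkhoffSum [MeasurableSpace α] (hf : Measurable f) (hg : Measurable g)
    (n : ℕ) : Measurable (birkhoffSum f g n) :=
  Finset.measurable_sum _ fun k _ => hg.comp (hf.iterate k)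

lemma Measurable.birkhoffMax [MeasurableSpace α] (hf : Measurable f) (hg : Measurable g)
    (N : ℕ) : Measurable (birkhoffMax f g N) :=
  Finset.measurable_range_sup'' fun n _ => hf.birkhoffSum hg n

lemma MeasureTheory.MeasurePreserving.integrable_birkhoffSum [MeasurableSpace α]
    {μ : Measure α} (hf : MeasurePreserving f μ μ) (hg : Integrable g μ) (n : ℕ) :
    Integrable (birkhoffSum f g n) μ :=
  integrable_finsetSum _ fun k _ => (hf.iterate k).integrable_comp_of_integrable hg

lemma MeasureTheory.MeasurePreserving.integrable_birkhoffMax [MeasurableSpace α]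
    {μ : Measure α} (hf : MeasurePreserving f μ μ) (hg : Integrable g μ) (hgm : Measurable g)
    (N : ℕ) : Integrable (birkhoffMax f g N) μ := by
  refine (integrable_finsetSum (range (N + 1)) fun n _ =>
    (hf.integrable_birkhoffSum hg n).abs).mono'
    (hf.measurable.birkhoffMax hgm N).aestronglyMeasurable (.of_forall fun x => ?_)
  obtain ⟨n, hn, hmax⟩ := exists_mem_eq_sup' nonempty_range_add_one
    (fun n => birkhoffSum f g n x)
  rw [Real.norm_eq_abs, birkhoffMax, hmax]
  exact single_le_sum (f := fun n => |birkhoffSum f g n x|) (fun _ _ => abs_nonneg _) hn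

theorem MeasureTheory.MeasurePreserving.setIntegral_birkhoffMax_pos_nonneg [MeasurableSpace α]
    {μ : Measure α} (hf : MeasurePreserving f μ μ) (hg : Integrable g μ) (hgm : Measurable g)
    (N : ℕ) : 0 ≤ ∫ x in {x | 0 < birkhoffMax f g N x}, g x ∂μ := by
  set E := {x | 0 < birkhoffMax f g N x}
  have hE : MeasurableSet E :=
    measurableSet_lt measurable_const (hf.measurable.birkhoffMax hgm N)
  have hM := hf.integrable_birkhoffMax hg hgm N
  have hMf : Integrable (birkhoffMax f g N ∘ f) μ := hf.integrable_comp_of_integrable hM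
  have hcomp : ∫ x, birkhoffMax f g N (f x) ∂μ = ∫ x, birkhoffMax f g N x ∂μ := by
    rw [← integral_map hf.measurable.aemeasurable (by rw [hf.map_eq]; exact hM.1), hf.map_eq]
  have := integral_mono hM ((hg.indicator hE).add hMf) (birkhoffMax_le_indicator_add N)
  rw [integral_add' (hg.indicator hE) hMf, integral_indicator hE] at this
  simp only [Function.comp_apply] at this
  linarith

theorem MeasureTheory.MeasurePreserving.ofReal_mul_measure_exists_birkhoffSum_indicator_gt_le
    [MeasurableSpace α] {μ : Measure α} [IsFiniteMeasure μ] (hf : MeasurePreserving f μ μ)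
    {s : Set α} (hs : MeasurableSet s) (β : ℝ) :
    ENNReal.ofReal β * μ {x | ∃ n : ℕ, β * n < birkhoffSum f (s.indicator 1) n x} ≤ μ s := by
  set g : α → ℝ := s.indicator 1 - fun _ => β
  have hgm : Measurable g := (measurable_const.indicator hs).sub measurable_const
  have hind : Integrable (s.indicator (1 : α → ℝ)) μ := (integrable_const 1).indicator hs
  have hg : Integrable g μ := hind.sub (integrable_const β)
  have hsum (n : ℕ) (x : α) :
      birkhoffSum f g n x = birkhoffSum f (s.indicator 1) n x - β * n := by
    rw [birkhoffSum_sub, birkhoffSum_of_comp_eq (φ := fun _ : α => β) rfl]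
    simp [mul_comm]
  set E : ℕ → Set α := fun N => {x | 0 < birkhoffMax f g N x}
  have hE (N : ℕ) : ENNReal.ofReal β * μ (E N) ≤ μ s := by
    have key : 0 ≤ ∫ x in E N, (s.indicator 1 x - β) ∂μ :=
      hf.setIntegral_birkhoffMax_pos_nonneg hg hgm N
    rw [integral_sub hind.integrableOn (integrable_const β), integral_indicator_one hs,
      setIntegral_const, measureReal_restrict_apply hs, smul_eq_mul] at key
    have hβE : β * μ.real (E N) ≤ μ.real s := by
      linarith [measureReal_mono (μ := μ) (Set.inter_subset_left : s ∩ E N ⊆ s)]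
    rcases le_total β 0 with hβ | hβ
    · simp [ENNReal.ofReal_of_nonpos hβ]
    calc ENNReal.ofReal β * μ (E N) = ENNReal.ofReal (β * μ.real (E N)) := by
          rw [ENNReal.ofReal_mul hβ, ofReal_measureReal]
      _ ≤ ENNReal.ofReal (μ.real s) := ENNReal.ofReal_le_ofReal hβE
      _ = μ s := ofReal_measureReal
  have hsub : {x | ∃ n : ℕ, β * n < birkhoffSum f (s.indicator 1) n x} ⊆ ⋃ N, E N := by
    rintro x ⟨n, hn⟩
    exact Set.mem_iUnion.2 ⟨n, (sub_pos.2 hn).trans_le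
      ((hsum n x).symm ▸ birkhoffSum_le_birkhoffMax le_rfl x)⟩
  have hmono : Monotone E := fun M N h x hx => hx.trans_le (birkhoffMax_mono h x)
  calc _ ≤ ENNReal.ofReal β * μ (⋃ N, E N) := by gcongr
    _ = ⨆ N, ENNReal.ofReal β * μ (E N) := by rw [hmono.measure_iUnion, ENNReal.mul_iSup]
    _ ≤ μ s := iSup_le hE

end Maximal

section UpperDensity

variable {α : Type*} {f : α → α}

lemma frequently_mul_lt_of_le_succ {a b : ℕ → ℝ} (hab : ∀ n, a n ≤ b (n + 1)) (q : ℝ) {ε : ℝ}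
    (hε : 0 < ε) (h : ∃ᶠ n in atTop, (q - ε / 2) * n < a n) :
    ∃ᶠ n in atTop, (q - ε) * n < b n := by
  refine (tendsto_add_atTop_nat 1).frequently ?_
  obtain ⟨N, hN⟩ := exists_nat_ge (2 * q / ε)
  refine (h.and_eventually (eventually_ge_atTop N)).mono fun n ⟨hn, hNn⟩ => ?_
  have : 2 * q ≤ n * ε := (div_le_iff₀ hε).1 (hN.trans (Nat.cast_le.2 hNn))
  push_cast
  nlinarith [hab n]

lemma birkhoffSum_indicator_one_le_succ (s : Set α) (n : ℕ) (x : α) :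
    birkhoffSum f (s.indicator (1 : α → ℝ)) n (f x) ≤
      birkhoffSum f (s.indicator 1) (n + 1) x := by
  rw [birkhoffSum_succ']
  exact le_add_of_nonneg_left (Set.indicator_nonneg (fun _ _ => zero_le_one) x)

theorem Ergodic.ae_eventually_birkhoffSum_indicator_le [MeasurableSpace α] {μ : Measure α}
    [IsProbabilityMeasure μ] (hf : Ergodic f μ) {s : Set α} (hs : MeasurableSet s) {q : ℝ}
    (hq : μ s < ENNReal.ofReal q) :
    ∀ᵐ x ∂μ, ∀ᶠ n in atTop, birkhoffSum f (s.indicator 1) n x ≤ q * n := by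
  -- upper visit frequency at least `q`; the slack `(1 / 2) ^ k` absorbs the shift by one step
  set L := {x | ∀ k : ℕ, ∃ᶠ n in atTop,
    (q - (1 / 2) ^ k) * n < birkhoffSum f (s.indicator (1 : α → ℝ)) n x}
  have hLm : MeasurableSet L := by
    simp only [L, frequently_atTop, Set.ofPred_forall, Set.ofPred_exists]
    exact .iInter fun k => .iInter fun N => .iUnion fun n => (MeasurableSet.const _).inter <|
      measurableSet_lt measurable_const
        (hf.measurable.birkhoffSum (measurable_const.indicator hs) n)
  have hLinv : f ⁻¹' L ⊆ L := fun x hx k =>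
    frequently_mul_lt_of_le_succ (fun n => birkhoffSum_indicator_one_le_succ s n x) q
      (by positivity) (by simpa [pow_succ, div_eq_mul_inv] using hx (k + 1))
  obtain ⟨k, hk⟩ : ∃ k : ℕ, μ s < ENNReal.ofReal (q - (1 / 2) ^ k) := by
    have hgap : 0 < q - (μ s).toReal := by
      linarith [(ENNReal.lt_ofReal_iff_toReal_lt (measure_ne_top μ s)).1 hq]
    obtain ⟨k, hk⟩ := exists_pow_lt_of_lt_one hgap (by norm_num : (1 / 2 : ℝ) < 1)
    exact ⟨k, (ENNReal.lt_ofReal_iff_toReal_lt (measure_ne_top μ s)).2 (by linarith)⟩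
  have hL0 : μ L = 0 := by
    refine ae_eq_empty.1 <| (hf.ae_empty_or_univ_of_preimage_ae_le hLm.nullMeasurableSet
      hLinv.eventuallyLE).resolve_right fun hLuniv => hk.not_ge ?_
    have hsub : L ⊆ {x | ∃ n : ℕ, (q - (1 / 2) ^ k) * n < birkhoffSum f (s.indicator 1) n x} :=
      fun x hx => (hx k).exists
    calc ENNReal.ofReal (q - (1 / 2) ^ k) = ENNReal.ofReal (q - (1 / 2) ^ k) * μ L := by
          rw [measure_congr hLuniv, measure_univ, mul_one]
      _ ≤ _ := by gcongr
      _ ≤ μ s := hf.toMeasurePreserving.ofReal_mul_measure_exists_birkhoffSum_indicator_gt_le hs _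
  filter_upwards [measure_eq_zero_iff_ae_notMem.1 hL0] with x hx
  simp only [L, Set.mem_ofPred_eq, not_forall, not_frequently, not_lt] at hx
  obtain ⟨k, hk⟩ := hx
  exact hk.mono fun n hn =>
    hn.trans (mul_le_mul_of_nonneg_right (sub_le_self _ (by positivity)) n.cast_nonneg)

end UpperDensity

lemma birkhoffSum_indicator_one_eq_card {α : Type*} (f : α → α) (s : Set α)
    [DecidablePred (· ∈ s)] (n : ℕ) (x : α) :
    birkhoffSum f (s.indicator (1 : α → ℝ)) n x = #{k ∈ range n | f^[k] x ∈ s} := by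
  simp [birkhoffSum, Set.indicator_apply]

lemma Int.le_card_of_Icc_subset {a b : ℤ} {s : Finset ℤ} (h : Icc a b ⊆ s) :
    b + 1 - a ≤ #s :=
  calc b + 1 - a ≤ (b + 1 - a).toNat := Int.self_le_toNat _
    _ = #(Icc a b) := by rw [Int.card_Icc]
    _ ≤ #s := by exact_mod_cast card_le_card h

lemma MeasureTheory.ae_forall_pos_of_forall_pos_ae {α : Type*} [MeasurableSpace α]
    {μ : Measure α} {P : ℝ → α → Prop} (hP : ∀ x δ δ', 0 < δ → δ ≤ δ' → P δ x → P δ' x)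
    (h : ∀ δ > 0, ∀ᵐ x ∂μ, P δ x) : ∀ᵐ x ∂μ, ∀ δ > 0, P δ x := by
  filter_upwards [ae_all_iff.2 fun k : ℕ => h (1 / (k + 1)) (by positivity)] with x hx δ hδ
  obtain ⟨k, hk⟩ := exists_nat_one_div_lt hδ
  exact hP x _ _ (by positivity) hk.le (hx k)

namespace Equiv.Perm

variable {Ω : Type*}

lemma coe_zpow_natCast (T : Perm Ω) (n : ℕ) : ⇑(T ^ (n : ℤ)) = T^[n] := by
  rw [zpow_natCast, coe_pow]

lemma coe_zpow_neg_natCast (T : Perm Ω) (n : ℕ) : ⇑(T ^ (-(n : ℤ))) = T.symm^[n] := by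
  rw [zpow_neg, zpow_natCast, ← inv_pow, coe_pow]
  rfl

lemma card_filter_zpow_apply_mem_le (T : Perm Ω) (C : Set Ω) [DecidablePred (· ∈ C)] (n : ℕ)
    (ω : Ω) :
    (#{l ∈ Icc (-n : ℤ) n | (T ^ l) ω ∈ C} : ℝ) ≤
      birkhoffSum T (C.indicator 1) (n + 1) ω + birkhoffSum T.symm (C.indicator 1) (n + 1) ω := by
  rw [birkhoffSum_indicator_one_eq_card, birkhoffSum_indicator_one_eq_card]
  norm_cast
  calc _ ≤ #(({k ∈ range (n + 1) | T^[k] ω ∈ C}.image (↑)) ∪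
          ({k ∈ range (n + 1) | T.symm^[k] ω ∈ C}.image fun k : ℕ => -(k : ℤ))) :=
        card_le_card ?_
    _ ≤ _ := (card_union_le _ _).trans (add_le_add card_image_le card_image_le)
  intro l hl
  simp only [mem_filter, mem_Icc] at hl
  obtain ⟨⟨hnl, hln⟩, hlC⟩ := hl
  simp only [mem_union, mem_image, mem_filter, mem_range]
  rcases le_total 0 l with h | h
  · refine .inl ⟨l.toNat, ⟨by omega, ?_⟩, Int.toNat_of_nonneg h⟩
    rwa [← coe_zpow_natCast, Int.toNat_of_nonneg h]
  · refine .inr ⟨(-l).toNat, ⟨by omega, ?_⟩, by omega⟩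
    rwa [← coe_zpow_neg_natCast, Int.toNat_of_nonneg (by omega), neg_neg]

variable [MeasurableSpace Ω] {T : Perm Ω}

lemma measurable_zpow (hT : Measurable T) (hTinv : Measurable T.symm) (k : ℤ) :
    Measurable ⇑(T ^ k) := by
  obtain ⟨n, rfl | rfl⟩ := k.eq_nat_or_neg
  · rw [coe_zpow_natCast]; exact hT.iterate n
  · rw [coe_zpow_neg_natCast]; exact hTinv.iterate n

lemma ae_exists_zpow_apply_mem {μ : Measure Ω} {A : Set Ω} (hErg : Ergodic T μ)
    (hTinv : Measurable T.symm) (hA : MeasurableSet A) (hA0 : μ A ≠ 0) :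
    ∀ᵐ ω ∂μ, ∃ k : ℤ, (T ^ k) ω ∈ A := by
  set S := ⋃ k : ℤ, ⇑(T ^ k) ⁻¹' A
  have hSm : MeasurableSet S :=
    .iUnion fun k => measurable_zpow hErg.measurable hTinv k hA
  have hSinv : ⇑T ⁻¹' S = S := by
    ext ω
    simp only [S, Set.mem_preimage, Set.mem_iUnion, ← mul_apply, ← zpow_add_one]
    exact ⟨fun ⟨k, hk⟩ => ⟨k + 1, hk⟩, fun ⟨k, hk⟩ => ⟨k - 1, by rwa [sub_add_cancel]⟩⟩
  have hS : ∀ᵐ ω ∂μ, ω ∈ S :=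
    (hErg.ae_mem_or_ae_notMem hSm hSinv).resolve_right fun hnot => hA0 <|
      measure_eq_zero_iff_ae_notMem.2 <| hnot.mono fun ω hω hωA =>
        hω (Set.mem_iUnion.2 ⟨0, hωA⟩)
  exact hS.mono fun ω hω => Set.mem_iUnion.1 hω

end Equiv.Perm

open Equiv Perm

def unvisitedWithin {Ω : Type*} (T : Perm Ω) (A : Set Ω) (m : ℕ) : Set Ω :=
  {ω | ∀ k : ℤ, |k| ≤ m → (T ^ k) ω ∉ A}

section Unvisited

variable {Ω : Type*} {T : Perm Ω} {A : Set Ω}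

lemma zpow_apply_mem_unvisitedWithin_iff {m : ℕ} {l : ℤ} {ω : Ω} :
    (T ^ l) ω ∈ unvisitedWithin T A m ↔ ∀ i : ℤ, |i| ≤ m → (T ^ (i + l)) ω ∉ A := by
  simp only [unvisitedWithin, Set.mem_ofPred_eq, zpow_add, mul_apply]

lemma sub_le_birkhoffSum_unvisitedWithin_add (m n : ℕ) (ω : Ω) {j k : ℤ}
    (hj : |j| ≤ n) (hk : |k| ≤ n) (hgap : ∀ l : ℤ, j < l → l < k → (T ^ l) ω ∉ A) :
    ((k - j : ℤ) : ℝ) ≤ 2 * m + 1 +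
      birkhoffSum T ((unvisitedWithin T A m).indicator 1) (n + 1) ω +
      birkhoffSum T.symm ((unvisitedWithin T A m).indicator 1) (n + 1) ω := by
  classical
  have hsub : Icc (j + m + 1) (k - m - 1) ⊆
      {l ∈ Icc (-n : ℤ) n | (T ^ l) ω ∈ unvisitedWithin T A m} := by
    intro l hl
    rw [mem_Icc] at hl
    rw [abs_le] at hj hk
    refine mem_filter.2 ⟨mem_Icc.2 ⟨by omega, by omega⟩, ?_⟩
    refine zpow_apply_mem_unvisitedWithin_iff.2 fun i hi => hgap _ ?_ ?_ <;>
      · rw [abs_le] at hi; omega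
  have hcount : ((k - m - 1 + 1 - (j + m + 1) : ℤ) : ℝ) ≤
      #{l ∈ Icc (-n : ℤ) n | (T ^ l) ω ∈ unvisitedWithin T A m} := by
    exact_mod_cast Int.le_card_of_Icc_subset hsub
  push_cast at hcount ⊢
  linarith [card_filter_zpow_apply_mem_le T (unvisitedWithin T A m) n ω]

variable [MeasurableSpace Ω] {μ : Measure Ω}

lemma measurableSet_unvisitedWithin (hT : Measurable T) (hTinv : Measurable T.symm)
    (hA : MeasurableSet A) (m : ℕ) : MeasurableSet (unvisitedWithin T A m) := by
  simp only [unvisitedWithin, Set.ofPred_forall]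
  exact .iInter fun k => .iInter fun _ => (measurable_zpow hT hTinv k hA).compl

lemma tendsto_measure_unvisitedWithin [IsFiniteMeasure μ] (hT : Measurable T)
    (hTinv : Measurable T.symm) (hA : MeasurableSet A)
    (hvisit : ∀ᵐ ω ∂μ, ∃ k : ℤ, (T ^ k) ω ∈ A) :
    Tendsto (fun m => μ (unvisitedWithin T A m)) atTop (𝓝 0) := by
  have hanti : Antitone (unvisitedWithin T A) := fun m m' h ω hω k hk =>
    hω k (hk.trans (by exact_mod_cast h))
  have hnull : μ (⋂ m, unvisitedWithin T A m) = 0 :=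
    measure_eq_zero_iff_ae_notMem.2 <| hvisit.mono fun ω ⟨k, hk⟩ hω =>
      Set.mem_iInter.1 hω k.natAbs k (Int.abs_eq_natAbs k).le hk
  rw [← hnull]
  exact tendsto_measure_iInter_atTop
    (fun m => (measurableSet_unvisitedWithin hT hTinv hA m).nullMeasurableSet) hanti
    ⟨0, measure_ne_top μ _⟩

theorem ae_eventually_sub_le_mul_of_forall_notMem [IsProbabilityMeasure μ]
    (hErg : Ergodic T μ) (hTinv : MeasurePreserving T.symm μ μ) (hA : MeasurableSet A)
    (hvisit : ∀ᵐ ω ∂μ, ∃ k : ℤ, (T ^ k) ω ∈ A) {δ : ℝ} (hδ : 0 < δ) :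
    ∀ᵐ ω ∂μ, ∀ᶠ n : ℕ in atTop, ∀ j k : ℤ, |j| ≤ n → |k| ≤ n →
      (∀ l : ℤ, j < l → l < k → (T ^ l) ω ∉ A) → ((k - j : ℤ) : ℝ) ≤ δ * n := by
  obtain ⟨m, hm⟩ := ((tendsto_measure_unvisitedWithin hErg.measurable hTinv.measurable hA
    hvisit).eventually_lt_const (ENNReal.ofReal_pos.2 (by positivity : 0 < δ / 4))).exists
  have hC := measurableSet_unvisitedWithin hErg.measurable hTinv.measurable hA m
  have hErgInv : Ergodic T.symm μ :=
    Ergodic.symm (e := ⟨T, hErg.measurable, hTinv.measurable⟩) hErg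
  filter_upwards [hErg.ae_eventually_birkhoffSum_indicator_le hC hm,
    hErgInv.ae_eventually_birkhoffSum_indicator_le hC hm] with ω hfwd hbwd
  filter_upwards [(tendsto_add_atTop_nat 1).eventually hfwd,
    (tendsto_add_atTop_nat 1).eventually hbwd,
    tendsto_natCast_atTop_atTop.eventually_ge_atTop ((4 * m + 2) / δ + 1)]
    with n hfn hbn hn j k hj hk hgap
  have hnδ : 4 * m + 2 ≤ (n - 1) * δ := (div_le_iff₀ hδ).1 (by linarith)
  push_cast at hfn hbn
  linarith [sub_le_birkhoffSum_unvisitedWithin_add m n ω hj hk hgap]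

end Unvisited

theorem stmt8_general
    {Ω : Type*} [MeasurableSpace Ω] (μ : Measure Ω) [IsProbabilityMeasure μ]
    (T : Equiv.Perm Ω)
    (hTinv : MeasurePreserving T.symm μ μ)
    (hErg : Ergodic (T : Ω → Ω) μ)
    (A : Set Ω) (hAmeas : MeasurableSet A) (hA : 0 < μ A) :
    ∀ᵐ ω ∂μ, ∀ δ > (0:ℝ), ∀ᶠ n : ℕ in atTop,
      (∃ k : ℤ, |k| ≤ (n:ℤ) ∧ ((T ^ k : Equiv.Perm Ω)) ω ∈ A) ∧
      ∀ j k : ℤ, |j| ≤ (n:ℤ) → ((T ^ j : Equiv.Perm Ω)) ω ∈ A →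
        |k| ≤ (n:ℤ) → ((T ^ k : Equiv.Perm Ω)) ω ∈ A → j < k →
        (∀ l : ℤ, j < l → l < k → ((T ^ l : Equiv.Perm Ω)) ω ∉ A) →
        ((k - j : ℤ) : ℝ) ≤ δ * n := by
  have hvisit := ae_exists_zpow_apply_mem hErg hTinv.measurable hAmeas hA.ne'
  have hgaps := ae_forall_pos_of_forall_pos_ae
    (fun _ _ _ _ hδδ' h => h.mono fun n hn j k hj hk hgap =>
      (hn j k hj hk hgap).trans (mul_le_mul_of_nonneg_right hδδ' n.cast_nonneg))
    fun δ hδ => ae_eventually_sub_le_mul_of_forall_notMem hErg hTinv hAmeas hvisit hδ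
  filter_upwards [hvisit, hgaps] with ω ⟨k₀, hk₀⟩ hgaps δ hδ
  filter_upwards [eventually_ge_atTop k₀.natAbs, hgaps δ hδ] with n hn hgapn
  refine ⟨⟨k₀, ?_, hk₀⟩, fun j k hj _ hk _ _ hgap => hgapn j k hj hk hgap⟩
  rw [Int.abs_eq_natAbs]
  exact_mod_cast hn

/-- Gap-density lemma: if `T` is an invertible ergodic measure-preserving map of a
probability space and `A` has positive measure, then a.s. the maximal gap `Δ_n`
between consecutive visit indices `k ∈ [-n,n]` (with `T^k ω ∈ A`) is `o(n)`:
for every `δ > 0`, eventually in `n` there is at least one visit index in `[-n,n]`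
and consecutive visit indices `j < k` in `[-n,n]` satisfy `k - j ≤ δ n`. -/
theorem stmt8
    {Ω : Type*} [MeasurableSpace Ω] (μ : Measure Ω) [IsProbabilityMeasure μ]
    (T : Equiv.Perm Ω)
    (hT : MeasurePreserving T μ μ) (hTinv : MeasurePreserving T.symm μ μ)
    (hErg : Ergodic (T : Ω → Ω) μ)
    (A : Set Ω) (hAmeas : MeasurableSet A) (hA : 0 < μ A) :
    ∀ᵐ ω ∂μ, ∀ δ > (0:ℝ), ∀ᶠ n : ℕ in atTop,
      (∃ k : ℤ, |k| ≤ (n:ℤ) ∧ ((T ^ k : Equiv.Perm Ω)) ω ∈ A) ∧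
      ∀ j k : ℤ, |j| ≤ (n:ℤ) → ((T ^ j : Equiv.Perm Ω)) ω ∈ A →
        |k| ≤ (n:ℤ) → ((T ^ k : Equiv.Perm Ω)) ω ∈ A → j < k →
        (∀ l : ℤ, j < l → l < k → ((T ^ l : Equiv.Perm Ω)) ω ∉ A) →
        ((k - j : ℤ) : ℝ) ≤ δ * n :=
  stmt8_general μ T hTinv hErg A hAmeas hA
end

section
/- Suppose a_n ∈ ℝ, p > 0, δ > 0 and N ∈ ℕ are such that for all n > N, (1/(n+1))·Σ_{k=0}^{n} a_k ∈ (p(1−δ/16), p(1+δ/16)), where each a_k ∈ {0,1}. Then there is no interval [L₁, L₂] ⊆ (N, ∞) of length greater than Kδ/4 with L₂ ≤ K, (Kδ−2N−1)/2 > Kδ/4, containing no index k with a_k = 1. -/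
theorem Finset.sum_range_succ_eq_of_eq_zero {M : Type*} [AddCommMonoid M] {f : ℕ → M}
    {m n : ℕ} (hmn : m ≤ n) (hf : ∀ k, m < k → k ≤ n → f k = 0) :
    ∑ k ∈ range (m + 1), f k = ∑ k ∈ range (n + 1), f k :=
  sum_subset (range_subset_range.2 (by omega)) fun k hk hk' => by
    simp only [mem_range] at hk hk'
    exact hf k (by omega) (by omega)

theorem mul_one_sub_lt_mul_one_add_of_avg_bounds {S p ε x y : ℝ} (hp : 0 < p)
    (hx : 0 < x) (hy : 0 < y) (hSx : 1 / x * S < p * (1 + ε))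
    (hSy : p * (1 - ε) < 1 / y * S) :
    y * (1 - ε) < x * (1 + ε) := by
  rw [one_div, inv_mul_eq_div, div_lt_iff₀ hx] at hSx
  rw [one_div, inv_mul_eq_div, lt_div_iff₀ hy] at hSy
  have : p * (y * (1 - ε)) < p * (x * (1 + ε)) := by linarith
  exact lt_of_mul_lt_mul_left this hp.le

theorem stmt9_general
    (a : ℕ → ℝ)
    (p δ : ℝ) (hp : 0 < p) (hδ : 0 < δ) (N K : ℕ)
    (havg : ∀ n : ℕ, N < n →
      (1 / ((n:ℝ) + 1)) * ∑ k ∈ Finset.range (n + 1), a k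
        ∈ Set.Ioo (p * (1 - δ/16)) (p * (1 + δ/16))) :
    ¬ ∃ L₁ L₂ : ℕ, N < L₁ ∧ L₁ ≤ L₂ ∧ L₂ ≤ K ∧
        (K:ℝ) * δ / 4 < (L₂:ℝ) - (L₁:ℝ) ∧
        (K:ℝ) * δ / 4 < ((K:ℝ) * δ - 2 * (N:ℝ) - 1) / 2 ∧
        (∀ k : ℕ, L₁ ≤ k → k ≤ L₂ → a k = 0) := by
  rintro ⟨L₁, L₂, hNL₁, hL₁₂, hL₂K, hlong, -, hzero⟩
  have hsum := Finset.sum_range_succ_eq_of_eq_zero hL₁₂ fun k hk => hzero k hk.le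
  have hupper := (havg L₁ hNL₁).2
  have hlower := (havg L₂ (hNL₁.trans_le hL₁₂)).1
  rw [← hsum] at hlower
  have hwindow := mul_one_sub_lt_mul_one_add_of_avg_bounds hp (by positivity) (by positivity)
    hupper hlower
  have hK : (1:ℝ) ≤ K := by exact_mod_cast (by omega : 1 ≤ K)
  have hL₁K : (L₁:ℝ) ≤ K := by exact_mod_cast hL₁₂.trans hL₂K
  have hL₂K' : (L₂:ℝ) ≤ K := by exact_mod_cast hL₂K
  -- `hwindow` says `L₂ - L₁ < δ (L₁ + L₂ + 2) / 16 ≤ δ (K + 1) / 8`, which is at most `Kδ/4`.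
  nlinarith [mul_nonneg hδ.le (sub_nonneg.2 hL₁K), mul_nonneg hδ.le (sub_nonneg.2 hL₂K'),
    mul_nonneg hδ.le (sub_nonneg.2 hK)]

/-- Combinatorial core of the gap-density lemma: if the running averages of a 0–1
sequence stay in the window `(p(1-δ/16), p(1+δ/16))` beyond index `N`, then there is
no all-zero interval `[L₁, L₂] ⊆ (N, ∞)` of length greater than `Kδ/4` with `L₂ ≤ K`
and `(Kδ - 2N - 1)/2 > Kδ/4`. -/
theorem stmt9
    (a : ℕ → ℝ) (ha : ∀ k, a k = 0 ∨ a k = 1)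
    (p δ : ℝ) (hp : 0 < p) (hδ : 0 < δ) (N K : ℕ)
    (havg : ∀ n : ℕ, N < n →
      (1 / ((n:ℝ) + 1)) * ∑ k ∈ Finset.range (n + 1), a k
        ∈ Set.Ioo (p * (1 - δ/16)) (p * (1 + δ/16))) :
    ¬ ∃ L₁ L₂ : ℕ, N < L₁ ∧ L₁ ≤ L₂ ∧ L₂ ≤ K ∧
        (K:ℝ) * δ / 4 < (L₂:ℝ) - (L₁:ℝ) ∧
        (K:ℝ) * δ / 4 < ((K:ℝ) * δ - 2 * (N:ℝ) - 1) / 2 ∧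
        (∀ k : ℕ, L₁ ≤ k → k ≤ L₂ → a k = 0) :=
  stmt9_general a p δ hp hδ N K havg
end
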